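/- In a stochastic game, if a distribution d₀ is not almost-sure winning for the reachability objective ◇T, then there exists a memoryless player-2 strategy τ such that for all player-1 strategies σ and all i ≥ 0, Pr^{σ,τ}_{d₀}(reaching T within i steps) ≤ 1 − η₀·η^n, where n = |Q|, η is the smallest positive transition probability, and η₀ is the smallest positive probability in d₀. -/

import Mathlib

open Finset

/-- A two-player stochastic game: transition kernel `δ q a b q'`. -/
structure Game (Q A : Type) where
  δ : Q → A → A → Q → ℝ

/-- Validity of the transition kernel: a probability distribution on `Q` for each `q,a,b`. -/
def IsGame {Q A : Type} [Fintype Q] (G : Game Q A) : Prop :=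
  (∀ q a b q', 0 ≤ G.δ q a b q') ∧ (∀ q a b, (∑ q' : Q, G.δ q a b q') = 1)

/-- A probability distribution over a finite set. -/
def IsDist {Q : Type} [Fintype Q] (d : Q → ℝ) : Prop :=
  (∀ q, 0 ≤ d q) ∧ (∑ q : Q, d q) = 1

/-- Randomized player-1 strategies: map (reversed) state histories to distributions on actions. -/
abbrev Strat1 (Q A : Type) := List Q → A → ℝ
/-- Randomized player-2 strategies: also see the action chosen by player 1. -/
abbrev Strat2 (Q A : Type) := List Q → A → A → ℝ

def IsStrat1 {Q A : Type} [Fintype A] (σ : Strat1 Q A) : Prop :=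
  ∀ h, (∀ a, 0 ≤ σ h a) ∧ (∑ a : A, σ h a) = 1

def IsStrat2 {Q A : Type} [Fintype A] (τ : Strat2 Q A) : Prop :=
  ∀ h a, (∀ b, 0 ≤ τ h a b) ∧ (∑ b : A, τ h a b) = 1

/-- Probability of a finite state history (in reverse chronological order:
the head is the current state), with the actions marginalized out. -/
def hprob {Q A : Type} [Fintype A] (G : Game Q A) (d0 : Q → ℝ)
    (σ : Strat1 Q A) (τ : Strat2 Q A) : List Q → ℝ
  | [] => 1
  | [q] => d0 q
  | q :: q' :: h =>
      (∑ a : A, ∑ b : A, σ (q' :: h) a * τ (q' :: h) a b * G.δ q' a b q) *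
        hprob G d0 σ τ (q' :: h)

/-- The outcome sequence of distributions: probability to be in state `q` after `i` rounds. -/
def outSeq {Q A : Type} [Fintype Q] [Fintype A] (G : Game Q A) (d0 : Q → ℝ)
    (σ : Strat1 Q A) (τ : Strat2 Q A) (i : ℕ) (q : Q) : ℝ :=
  ∑ h : Fin i → Q, hprob G d0 σ τ (q :: (List.ofFn h).reverse)

/-- Probability mass of a set of states. -/
def mass {Q : Type} (d : Q → ℝ) (T : Finset Q) : ℝ := ∑ q ∈ T, d q

/-- The four synchronizing modes, on a sequence of probability masses. -/
def AlwaysSync (m : ℕ → ℝ) (ε : ℝ) : Prop := ∀ i, 1 - ε ≤ m i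
def EventSync (m : ℕ → ℝ) (ε : ℝ) : Prop := ∃ i, 1 - ε ≤ m i
def WeaklySync (m : ℕ → ℝ) (ε : ℝ) : Prop := ∀ N, ∃ i, N ≤ i ∧ 1 - ε ≤ m i
def StronglySync (m : ℕ → ℝ) (ε : ℝ) : Prop := ∃ N, ∀ i, N ≤ i → 1 - ε ≤ m i

/-- Sure winning region for a synchronizing mode `sync`: some player-1 strategy ensures
`1`-synchronization against all player-2 strategies. -/
def SureWin {Q A : Type} [Fintype Q] [Fintype A] (G : Game Q A) (T : Finset Q)
    (sync : (ℕ → ℝ) → ℝ → Prop) : Set (Q → ℝ) :=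
  {d0 | IsDist d0 ∧ ∃ σ, IsStrat1 σ ∧ ∀ τ, IsStrat2 τ →
    sync (fun i => mass (outSeq G d0 σ τ i) T) 0}

/-- Almost-sure winning region for a synchronizing mode `sync`: some player-1 strategy
ensures `(1-ε)`-synchronization for all `ε > 0` against all player-2 strategies. -/
def ASWin {Q A : Type} [Fintype Q] [Fintype A] (G : Game Q A) (T : Finset Q)
    (sync : (ℕ → ℝ) → ℝ → Prop) : Set (Q → ℝ) :=
  {d0 | IsDist d0 ∧ ∃ σ, IsStrat1 σ ∧ ∀ τ, IsStrat2 τ →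
    ∀ ε : ℝ, 0 < ε → sync (fun i => mass (outSeq G d0 σ τ i) T) ε}

/-- Dirac distribution. -/
def dirac {Q : Type} [DecidableEq Q] (q : Q) : Q → ℝ := fun q' => if q' = q then 1 else 0

open Classical in
/-- Probability of reaching `T` within `i` steps: total probability of the length-`(i+1)`
state histories that visit `T`. -/
noncomputable def reachProb {Q A : Type} [Fintype Q] [Fintype A] (G : Game Q A)
    (d0 : Q → ℝ) (σ : Strat1 Q A) (τ : Strat2 Q A) (T : Finset Q) (i : ℕ) : ℝ :=
  ∑ h : Fin (i + 1) → Q,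
    if ∃ j, h j ∈ T then hprob G d0 σ τ (List.ofFn h).reverse else 0

/-- A memoryless player-1 strategy only depends on the current state (the head of the
reversed history). -/
def Memoryless1 {Q A : Type} (σ : Strat1 Q A) : Prop :=
  ∀ h h' : List Q, h.head? = h'.head? → σ h = σ h'

/-- A memoryless player-2 strategy only depends on the current state and the action
of player 1. -/
def Memoryless2 {Q A : Type} (τ : Strat2 Q A) : Prop :=
  ∀ (h h' : List Q) (a : A), h.head? = h'.head? → τ h a = τ h' a

/-!
Let `W = νY. μX. T ∪ APre(Y, X)`. If the support of `d₀` lies in `W`, player 1 wins almost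
surely: at a state of `W \ T` she plays an action witnessing its membership in the attractor, which
keeps the play in `W` surely and, whatever player 2 does, lowers the attractor rank with
probability at least `η`; so each block of `|Q|` steps reaches `T` with probability at least `η^|Q|`
and the probability of avoiding `T` decays geometrically.

Otherwise some `q₀` with `d₀ q₀ ≥ η₀` lies outside `W`. Weight a state of rank `r` in the outer
decomposition of the complement of `W` by `η^r` (and the states of `W ⊇ T` by `0`). Against every
action, player 2 has a memoryless answer that does not decrease the expected weight: either some
successor has lower rank and is reached with probability `≥ η`, or all successors keep rank
`≤ r`. Since weights are at most `1`, the probability of avoiding `T` for `i` steps is at least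
`d₀ q₀ · η^(rank q₀) ≥ η₀ · η^|Q|`.
-/

open Function

section WeightedAverage

theorem mul_le_mul_of_pos_imp {p x y : ℝ} (hp : 0 ≤ p) (h : 0 < p → x ≤ y) : p * x ≤ p * y := by
  rcases hp.eq_or_lt with rfl | hp
  · simp
  · exact mul_le_mul_of_nonneg_left (h hp) hp.le

variable {ι : Type*} {s : Finset ι} {p x : ι → ℝ} {c : ℝ}

theorem le_sum_mul_of_forall_pos (hp : ∀ i ∈ s, 0 ≤ p i) (hp1 : ∑ i ∈ s, p i = 1)
    (hx : ∀ i ∈ s, 0 < p i → c ≤ x i) : c ≤ ∑ i ∈ s, p i * x i :=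
  calc c = ∑ i ∈ s, p i * c := by rw [← sum_mul, hp1, one_mul]
    _ ≤ ∑ i ∈ s, p i * x i := sum_le_sum fun i hi => mul_le_mul_of_pos_imp (hp i hi) (hx i hi)

theorem sum_mul_le_of_forall_pos (hp : ∀ i ∈ s, 0 ≤ p i) (hp1 : ∑ i ∈ s, p i = 1)
    (hx : ∀ i ∈ s, 0 < p i → x i ≤ c) : ∑ i ∈ s, p i * x i ≤ c := by
  have := le_sum_mul_of_forall_pos (x := -x) hp hp1 fun i hi h => neg_le_neg (hx i hi h)
  simpa [sum_neg_distrib] using this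

theorem sum_mul_le_sub_of_forall_pos [DecidableEq ι] {j : ι} {ε : ℝ} (hj : j ∈ s)
    (hp : ∀ i ∈ s, 0 ≤ p i) (hp1 : ∑ i ∈ s, p i = 1) (hx : ∀ i ∈ s, 0 < p i → x i ≤ c)
    (hxj : x j ≤ c - ε) : ∑ i ∈ s, p i * x i ≤ c - p j * ε :=
  calc ∑ i ∈ s, p i * x i ≤ ∑ i ∈ s, p i * (c - if i = j then ε else 0) :=
        sum_le_sum fun i hi => mul_le_mul_of_pos_imp (hp i hi) fun hpi => by
          split_ifs with hij
          · exact hij ▸ hxj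
          · simpa using hx i hi hpi
    _ = c - p j * ε := by simp [mul_sub, sum_sub_distrib, ← sum_mul, hp1, hj]

end WeightedAverage

variable {Q A : Type}

theorem IsGame.le_one_of_le_pos_prob [Fintype Q] {G : Game Q A} (hG : IsGame G) {η : ℝ}
    (hηmin : ∀ q a b q', 0 < G.δ q a b q' → η ≤ G.δ q a b q') (q : Q) (a : A) : η ≤ 1 := by
  obtain ⟨q', -, hq'⟩ : ∃ q' ∈ univ, (0 : ℝ) < G.δ q a a q' :=
    exists_lt_of_sum_lt (by simp [hG.2 q a a])
  calc η ≤ G.δ q a a q' := hηmin _ _ _ _ hq'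
    _ ≤ ∑ q'', G.δ q a a q'' :=
        single_le_sum (f := G.δ q a a) (fun _ _ => hG.1 _ _ _ _) (mem_univ q')
    _ = 1 := hG.2 q a a

section Kernel

variable [Fintype A] (G : Game Q A) (σ : Strat1 Q A) (τ : Strat2 Q A)

def stepKernel : List Q → Q → ℝ
  | [], _ => 0
  | q :: h, q' => ∑ a, ∑ b, σ (q :: h) a * τ (q :: h) a b * G.δ q a b q'

theorem hprob_cons (d0 : Q → ℝ) {h : List Q} (hh : h ≠ []) (q : Q) :
    hprob G d0 σ τ (q :: h) = stepKernel G σ τ h q * hprob G d0 σ τ h := by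
  cases h with
  | nil => exact absurd rfl hh
  | cons _ _ => rfl

variable [Fintype Q] {G σ τ}

theorem stepKernel_nonneg (hG : IsGame G) (hσ : IsStrat1 σ) (hτ : IsStrat2 τ) (h : List Q)
    (q : Q) : 0 ≤ stepKernel G σ τ h q := by
  cases h with
  | nil => exact le_rfl
  | cons q' t =>
    exact sum_nonneg fun a _ => sum_nonneg fun b _ =>
      mul_nonneg (mul_nonneg ((hσ _).1 a) ((hτ _ a).1 b)) (hG.1 _ _ _ _)

theorem sum_stepKernel_mul (q : Q) (t : List Q) (g : Q → ℝ) :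
    ∑ q', stepKernel G σ τ (q :: t) q' * g q' =
      ∑ a, σ (q :: t) a * ∑ b, τ (q :: t) a b * ∑ q', G.δ q a b q' * g q' := by
  simp only [stepKernel, sum_mul, mul_sum]
  rw [sum_comm]
  refine sum_congr rfl fun a _ => ?_
  rw [sum_comm]
  exact sum_congr rfl fun b _ => sum_congr rfl fun q' _ => by ring

theorem le_sum_stepKernel_mul (hσ : IsStrat1 σ) (hτ : IsStrat2 τ)
    {q : Q} {t : List Q} {g : Q → ℝ} {c : ℝ}
    (hc : ∀ a b, 0 < σ (q :: t) a → 0 < τ (q :: t) a b → c ≤ ∑ q', G.δ q a b q' * g q') :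
    c ≤ ∑ q', stepKernel G σ τ (q :: t) q' * g q' := by
  rw [sum_stepKernel_mul]
  refine le_sum_mul_of_forall_pos (fun a _ => (hσ _).1 a) (hσ _).2 fun a _ ha => ?_
  exact le_sum_mul_of_forall_pos (fun b _ => (hτ _ a).1 b) (hτ _ a).2 fun b _ hb => hc a b ha hb

theorem sum_stepKernel_mul_le (hσ : IsStrat1 σ) (hτ : IsStrat2 τ)
    {q : Q} {t : List Q} {g : Q → ℝ} {c : ℝ}
    (hc : ∀ a b, 0 < σ (q :: t) a → 0 < τ (q :: t) a b → ∑ q', G.δ q a b q' * g q' ≤ c) :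
    ∑ q', stepKernel G σ τ (q :: t) q' * g q' ≤ c := by
  rw [sum_stepKernel_mul]
  refine sum_mul_le_of_forall_pos (fun a _ => (hσ _).1 a) (hσ _).2 fun a _ ha => ?_
  exact sum_mul_le_of_forall_pos (fun b _ => (hτ _ a).1 b) (hτ _ a).2 fun b _ hb => hc a b ha hb

theorem sum_stepKernel (hG : IsGame G) (hσ : IsStrat1 σ) (hτ : IsStrat2 τ) (q : Q)
    (t : List Q) : ∑ q', stepKernel G σ τ (q :: t) q' = 1 := by
  simpa [hG.2, (hσ _).2, (hτ _ _).2] using sum_stepKernel_mul (G := G) (σ := σ) (τ := τ) q t 1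

end Kernel

section Histories

variable [Fintype Q]

theorem sum_ofFn_reverse_succ (F : List Q → ℝ) (k : ℕ) :
    ∑ f : Fin (k + 1) → Q, F (List.ofFn f).reverse =
      ∑ f : Fin k → Q, ∑ q, F (q :: (List.ofFn f).reverse) := by
  rw [← (Fin.snocEquiv fun _ => Q).sum_comp, Fintype.sum_prod_type, sum_comm]
  simp only [Fin.snocEquiv_apply, List.ofFn_succ', Fin.snoc_last, Fin.snoc_castSucc,
    List.concat_eq_append, List.reverse_append]
  rfl

theorem sum_ofFn_reverse_one (F : List Q → ℝ) :
    ∑ f : Fin 1 → Q, F (List.ofFn f).reverse = ∑ q, F [q] :=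
  Fintype.sum_equiv (Equiv.funUnique (Fin 1) Q) _ _ fun f => by simp

end Histories

section Avoidance

open Classical

variable [Fintype Q] [Fintype A] (G : Game Q A) (d0 : Q → ℝ) (σ : Strat1 Q A)
  (τ : Strat2 Q A) (T : Finset Q)

/-- Probability that the next `m` states all avoid `T` after the history `h`; the states of `h`
themselves are not tested. -/
noncomputable def avoidFrom : List Q → ℕ → ℝ
  | _, 0 => 1
  | h, m + 1 => ∑ q, stepKernel G σ τ h q * if q ∈ T then 0 else avoidFrom (q :: h) m

noncomputable def avoidProb (i : ℕ) : ℝ :=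
  ∑ h : Fin (i + 1) → Q, if ∃ j, h j ∈ T then 0 else hprob G d0 σ τ (List.ofFn h).reverse

noncomputable def avoidMass (m : ℕ) (h : List Q) : ℝ :=
  if ∃ x ∈ h, x ∈ T then 0 else hprob G d0 σ τ h * avoidFrom G σ τ T h m

variable {G d0 σ τ T}

theorem sum_hprob_eq_one (hG : IsGame G) (hd0 : IsDist d0) (hσ : IsStrat1 σ) (hτ : IsStrat2 τ)
    (i : ℕ) : ∑ f : Fin (i + 1) → Q, hprob G d0 σ τ (List.ofFn f).reverse = 1 := by
  induction i with
  | zero => rw [sum_ofFn_reverse_one]; exact hd0.2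
  | succ i ih =>
    rw [sum_ofFn_reverse_succ, ← ih]
    refine sum_congr rfl fun f _ => ?_
    obtain ⟨q, t, ht⟩ := List.exists_cons_of_ne_nil (by simp : (List.ofFn f).reverse ≠ [])
    simp_rw [ht, hprob_cons G σ τ d0 (List.cons_ne_nil q t), ← sum_mul,
      sum_stepKernel hG hσ hτ, one_mul]

theorem reachProb_add_avoidProb (hG : IsGame G) (hd0 : IsDist d0) (hσ : IsStrat1 σ)
    (hτ : IsStrat2 τ) (i : ℕ) : reachProb G d0 σ τ T i + avoidProb G d0 σ τ T i = 1 := by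
  rw [reachProb, avoidProb, ← sum_add_distrib, ← sum_hprob_eq_one hG hd0 hσ hτ i]
  exact sum_congr rfl fun f _ => by split_ifs <;> simp

theorem sum_avoidMass_cons {h : List Q} (hh : h ≠ []) (m : ℕ) :
    ∑ q, avoidMass G d0 σ τ T m (q :: h) = avoidMass G d0 σ τ T (m + 1) h := by
  by_cases hT : ∃ x ∈ h, x ∈ T
  · simp [avoidMass, hT]
  · have hcons (q : Q) : (∃ x ∈ q :: h, x ∈ T) ↔ q ∈ T := by simp [hT]
    simp only [avoidMass, hcons, hT, if_false, avoidFrom, hprob_cons G σ τ d0 hh, mul_sum]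
    exact sum_congr rfl fun q _ => by split_ifs <;> ring

theorem avoidProb_add (i m : ℕ) :
    avoidProb G d0 σ τ T (i + m) =
      ∑ f : Fin (i + 1) → Q, avoidMass G d0 σ τ T m (List.ofFn f).reverse := by
  induction m generalizing i with
  | zero =>
    refine sum_congr rfl fun f _ => ?_
    simp only [avoidMass, avoidFrom, mul_one, List.mem_reverse, List.mem_ofFn,
      exists_exists_eq_and]
  | succ m ih =>
    rw [← add_assoc, add_right_comm, ih, sum_ofFn_reverse_succ]
    exact sum_congr rfl fun f _ => sum_avoidMass_cons (by simp) m

theorem avoidProb_eq_sum (m : ℕ) :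
    avoidProb G d0 σ τ T m = ∑ q, d0 q * if q ∈ T then 0 else avoidFrom G σ τ T [q] m := by
  rw [← zero_add m, avoidProb_add, sum_ofFn_reverse_one]
  exact sum_congr rfl fun q _ => by simp [avoidMass, hprob]

theorem avoidFrom_nonneg (hG : IsGame G) (hσ : IsStrat1 σ) (hτ : IsStrat2 τ) (m : ℕ) (h : List Q) :
    0 ≤ avoidFrom G σ τ T h m := by
  induction m generalizing h with
  | zero => exact zero_le_one
  | succ m ih =>
    exact sum_nonneg fun q _ => mul_nonneg (stepKernel_nonneg hG hσ hτ h q)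
      (by split_ifs; exacts [le_rfl, ih _])

theorem avoidFrom_succ_le (hG : IsGame G) (hσ : IsStrat1 σ) (hτ : IsStrat2 τ) (m : ℕ) (q : Q)
    (t : List Q) : avoidFrom G σ τ T (q :: t) (m + 1) ≤ avoidFrom G σ τ T (q :: t) m := by
  induction m generalizing q t with
  | zero =>
    calc avoidFrom G σ τ T (q :: t) 1 ≤ ∑ q', stepKernel G σ τ (q :: t) q' * 1 :=
          sum_le_sum fun q' _ => mul_le_mul_of_nonneg_left (by split_ifs <;> simp [avoidFrom])
            (stepKernel_nonneg hG hσ hτ _ q')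
      _ = avoidFrom G σ τ T (q :: t) 0 := by simp [sum_stepKernel hG hσ hτ, avoidFrom]
  | succ m ih =>
    exact sum_le_sum fun q' _ => mul_le_mul_of_nonneg_left
      (by split_ifs; exacts [le_rfl, ih q' (q :: t)]) (stepKernel_nonneg hG hσ hτ _ q')

theorem avoidFrom_add_le (hG : IsGame G) (hσ : IsStrat1 σ) (hτ : IsStrat2 τ) (m k : ℕ) (q : Q)
    (t : List Q) : avoidFrom G σ τ T (q :: t) (m + k) ≤ avoidFrom G σ τ T (q :: t) m :=
  antitone_nat_of_succ_le (fun n => avoidFrom_succ_le hG hσ hτ n q t) (m.le_add_right k)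

end Avoidance

section PureStrategies

open Classical

noncomputable def pureStrat1 [Nonempty A] (α : Q → A) : Strat1 Q A :=
  fun h a => if a = h.head?.elim (Classical.arbitrary A) α then 1 else 0

noncomputable def pureStrat2 (β : Q → A → A) : Strat2 Q A :=
  fun h a b => if b = h.head?.elim a (β · a) then 1 else 0

theorem eq_of_pureStrat1_pos [Nonempty A] {α : Q → A} {q : Q} {t : List Q} {a : A}
    (ha : 0 < pureStrat1 α (q :: t) a) : a = α q := by
  by_contra hne
  simp [pureStrat1, hne] at ha

theorem eq_of_pureStrat2_pos {β : Q → A → A} {q : Q} {t : List Q} {a b : A}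
    (hb : 0 < pureStrat2 β (q :: t) a b) : b = β q a := by
  by_contra hne
  simp [pureStrat2, hne] at hb

theorem memoryless2_pureStrat2 (β : Q → A → A) : Memoryless2 (pureStrat2 β) :=
  fun h h' a hh => funext fun b => by simp only [pureStrat2, hh]

variable [Fintype A]

theorem isStrat1_pureStrat1 [Nonempty A] (α : Q → A) : IsStrat1 (pureStrat1 α) :=
  fun h => ⟨fun a => by unfold pureStrat1; split_ifs <;> norm_num, by simp [pureStrat1]⟩

theorem isStrat2_pureStrat2 (β : Q → A → A) : IsStrat2 (pureStrat2 β) :=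
  fun h a => ⟨fun b => by unfold pureStrat2; split_ifs <;> norm_num, by simp [pureStrat2]⟩

end PureStrategies

section Spoiling

open Classical

variable [Fintype Q] [Fintype A] {G : Game Q A} {T : Finset Q} {w : Q → ℝ} {β : Q → A → A}

theorem le_avoidFrom_pureStrat2 (hG : IsGame G) {σ : Strat1 Q A} (hσ : IsStrat1 σ)
    (hw1 : ∀ q, w q ≤ 1) (hwT : ∀ q ∈ T, w q = 0)
    (hβ : ∀ q a, w q ≤ ∑ q', G.δ q a (β q a) q' * w q') (m : ℕ) (q : Q) (t : List Q) :
    w q ≤ if q ∈ T then 0 else avoidFrom G σ (pureStrat2 β) T (q :: t) m := by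
  split_ifs with hq
  · exact (hwT q hq).le
  induction m generalizing q t with
  | zero => exact hw1 q
  | succ m ih =>
    refine le_sum_stepKernel_mul hσ (isStrat2_pureStrat2 β) fun a b _ hb => ?_
    rw [eq_of_pureStrat2_pos hb]
    refine (hβ q a).trans (sum_le_sum fun q' _ => mul_le_mul_of_nonneg_left ?_ (hG.1 _ _ _ _))
    split_ifs with hq'
    · exact (hwT q' hq').le
    · exact ih q' (q :: t) hq'

theorem mul_le_avoidProb_pureStrat2 (hG : IsGame G) {d0 : Q → ℝ} (hd0 : IsDist d0)
    {σ : Strat1 Q A} (hσ : IsStrat1 σ) (hw1 : ∀ q, w q ≤ 1) (hwT : ∀ q ∈ T, w q = 0)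
    (hβ : ∀ q a, w q ≤ ∑ q', G.δ q a (β q a) q' * w q') (q : Q) (i : ℕ) :
    d0 q * w q ≤ avoidProb G d0 σ (pureStrat2 β) T i := by
  rw [avoidProb_eq_sum]
  refine (mul_le_mul_of_nonneg_left (le_avoidFrom_pureStrat2 hG hσ hw1 hwT hβ i q [])
    (hd0.1 q)).trans (single_le_sum (f := fun q' => d0 q' *
      if q' ∈ T then 0 else avoidFrom G σ (pureStrat2 β) T [q'] i) (fun q' _ => ?_) (mem_univ q))
  refine mul_nonneg (hd0.1 q') ?_
  split_ifs
  exacts [le_rfl, avoidFrom_nonneg hG hσ (isStrat2_pureStrat2 β) i _]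

end Spoiling

def supp (G : Game Q A) (q : Q) (a b : A) : Set Q := {q' | 0 < G.δ q a b q'}

def IsAttractorStrategy (G : Game Q A) (T : Finset Q) (W : Set Q) (ρ : Q → ℕ) (α : Q → A) :
    Prop :=
  ∀ q ∈ W, q ∉ T → ∀ b, supp G q (α q) b ⊆ W ∧ ∃ q' ∈ supp G q (α q) b, ρ q' < ρ q

section Ranking

open Classical

variable [Fintype Q] [Fintype A] [Nonempty A] {G : Game Q A} {T : Finset Q} {W : Set Q}
  {ρ : Q → ℕ} {α : Q → A} {η : ℝ}

theorem avoidFrom_pureStrat1_add_le (hG : IsGame G) (hη : 0 ≤ η) (hη1 : η ≤ 1)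
    (hηmin : ∀ q a b q', 0 < G.δ q a b q' → η ≤ G.δ q a b q')
    (hα : IsAttractorStrategy G T W ρ α)
    {τ : Strat2 Q A} (hτ : IsStrat2 τ) {m : ℕ} {B : ℝ} (hB : 0 ≤ B)
    (hm : ∀ q ∈ W, q ∉ T → ∀ t, avoidFrom G (pureStrat1 α) τ T (q :: t) m ≤ B) (k : ℕ) :
    ∀ q ∈ W, q ∉ T → ρ q ≤ k → ∀ t,
      avoidFrom G (pureStrat1 α) τ T (q :: t) (m + k) ≤ (1 - η ^ k) * B := by
  induction k with
  | zero =>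
    intro q hW hT hρ t
    obtain ⟨-, q', -, hq'⟩ := hα q hW hT (α q)
    omega
  | succ k ih =>
    intro q hW hT hρ t
    refine sum_stepKernel_mul_le (isStrat1_pureStrat1 α) hτ fun a b ha _ => ?_
    obtain rfl := eq_of_pureStrat1_pos ha
    obtain ⟨hsupp, qs, hqs, hρqs⟩ := hα q hW hT b
    have hle : ∀ q' ∈ univ, 0 < G.δ q (α q) b q' →
        (if q' ∈ T then 0 else avoidFrom G (pureStrat1 α) τ T (q' :: q :: t) (m + k)) ≤ B := by
      intro q' _ hq'
      split_ifs with hq'T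
      · exact hB
      · exact (avoidFrom_add_le hG (isStrat1_pureStrat1 α) hτ m k q' _).trans
          (hm q' (hsupp hq') hq'T _)
    have hlt : (if qs ∈ T then 0 else
        avoidFrom G (pureStrat1 α) τ T (qs :: q :: t) (m + k)) ≤ B - η ^ k * B := by
      split_ifs with hqsT
      · nlinarith [pow_le_one₀ hη hη1 (n := k)]
      · linarith [ih qs (hsupp hqs) hqsT (by omega) (q :: t)]
    calc _ ≤ B - G.δ q (α q) b qs * (η ^ k * B) :=
          sum_mul_le_sub_of_forall_pos (mem_univ qs) (fun _ _ => hG.1 _ _ _ _) (hG.2 _ _ _) hle hlt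
      _ ≤ B - η * (η ^ k * B) := by
          gcongr
          exact hηmin _ _ _ _ hqs
      _ = (1 - η ^ (k + 1)) * B := by ring

theorem avoidFrom_pureStrat1_le (hG : IsGame G) (hη : 0 ≤ η) (hη1 : η ≤ 1)
    (hηmin : ∀ q a b q', 0 < G.δ q a b q' → η ≤ G.δ q a b q')
    (hα : IsAttractorStrategy G T W ρ α)
    {N : ℕ} (hρ : ∀ q ∈ W, ρ q ≤ N) {τ : Strat2 Q A} (hτ : IsStrat2 τ) (j : ℕ) :
    ∀ q ∈ W, q ∉ T → ∀ t, avoidFrom G (pureStrat1 α) τ T (q :: t) (j * N) ≤ (1 - η ^ N) ^ j := by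
  induction j with
  | zero => intro q _ _ t; simp [avoidFrom]
  | succ j ih =>
    intro q hW hT t
    have hc : 0 ≤ 1 - η ^ N := sub_nonneg.2 (pow_le_one₀ hη hη1)
    rw [Nat.succ_mul, pow_succ']
    exact avoidFrom_pureStrat1_add_le hG hη hη1 hηmin hα hτ (pow_nonneg hc j) ih N q hW hT
      (hρ q hW) t

theorem exists_le_reachProb_pureStrat1 (hG : IsGame G) {d0 : Q → ℝ} (hd0 : IsDist d0)
    (hη : 0 < η) (hη1 : η ≤ 1) (hηmin : ∀ q a b q', 0 < G.δ q a b q' → η ≤ G.δ q a b q')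
    (hα : IsAttractorStrategy G T W ρ α)
    {N : ℕ} (hρ : ∀ q ∈ W, ρ q ≤ N) (hd0W : ∀ q, 0 < d0 q → q ∈ W) {τ : Strat2 Q A}
    (hτ : IsStrat2 τ) {ε : ℝ} (hε : 0 < ε) :
    ∃ i, 1 - ε ≤ reachProb G d0 (pureStrat1 α) τ T i := by
  obtain ⟨j, hj⟩ := exists_pow_lt_of_lt_one hε (sub_lt_self 1 (pow_pos hη N))
  have havoid : avoidProb G d0 (pureStrat1 α) τ T (j * N) ≤ (1 - η ^ N) ^ j := by
    rw [avoidProb_eq_sum]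
    refine sum_mul_le_of_forall_pos (fun q _ => hd0.1 q) hd0.2 fun q _ hq => ?_
    split_ifs with hqT
    · exact pow_nonneg (sub_nonneg.2 (pow_le_one₀ hη.le hη1)) j
    · exact avoidFrom_pureStrat1_le hG hη.le hη1 hηmin hα hρ hτ j q (hd0W q hq) hqT []
  refine ⟨j * N, ?_⟩
  linarith [reachProb_add_avoidProb (T := T) hG hd0 (isStrat1_pureStrat1 α) hτ (j * N)]

end Ranking

section FixedPoints

open Set

variable [Fintype Q] {F : Set Q → Set Q}

theorem isFixedPt_iterate_card_univ (hF : Monotone F) :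
    IsFixedPt F (F^[Fintype.card Q] univ) := by
  have hanti : Antitone fun k => F^[k] univ := hF.antitone_iterate_of_map_le (subset_univ _)
  have heq {k : ℕ} (h : (F^[k] univ).ncard = (F^[k + 1] univ).ncard) :
      F^[k + 1] univ = F^[k] univ :=
    eq_of_subset_of_ncard_le (hanti k.le_succ) h.le (toFinite _)
  obtain ⟨N, hN, hstab⟩ := Nat.stabilises_of_antitone (f := fun k => (F^[k] univ).ncard)
    (fun i j hij => ncard_le_ncard (hanti hij)) fun k h => by
      simp only [iterate_succ_apply'] at h heq ⊢
      rw [heq h]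
      exact h
  replace hN : N ≤ Fintype.card Q := by simpa [Nat.card_eq_fintype_card] using hN
  have := heq ((hstab _ hN).trans (hstab _ (hN.trans (Nat.le_succ _))).symm)
  rwa [iterate_succ_apply'] at this

theorem isFixedPt_iterate_card_empty (hF : Monotone F) :
    IsFixedPt F (F^[Fintype.card Q] ∅) := by
  have hmono : Monotone fun k => F^[k] ∅ := hF.monotone_iterate_of_le_map (empty_subset _)
  have heq {k : ℕ} (h : (F^[k] ∅).ncard = (F^[k + 1] ∅).ncard) :
      F^[k] ∅ = F^[k + 1] ∅ :=
    eq_of_subset_of_ncard_le (hmono k.le_succ) h.ge (toFinite _)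
  have hstab := Nat.stabilises_of_monotone (f := fun k => (F^[k] ∅).ncard)
    (b := Fintype.card Q) (fun i j hij => ncard_le_ncard (hmono hij))
    (fun k => by simpa [Nat.card_eq_fintype_card] using ncard_le_ncard (subset_univ (F^[k] ∅)))
    (fun k h => by
      simp only [iterate_succ_apply'] at h heq ⊢
      rw [← heq h]
      exact h) (Nat.le_succ _)
  have := heq hstab.symm
  rw [iterate_succ_apply'] at this
  exact this.symm

end FixedPoints

section AlmostSureRegion

open Set Classical

def APre (G : Game Q A) (Y X : Set Q) : Set Q :=
  {q | ∃ a, ∀ b, supp G q a b ⊆ Y ∧ (supp G q a b ∩ X).Nonempty}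

variable {G : Game Q A} {T : Finset Q}

theorem APre_mono {Y Y' X X' : Set Q} (hY : Y ⊆ Y') (hX : X ⊆ X') :
    APre G Y X ⊆ APre G Y' X' :=
  fun _ ⟨a, ha⟩ => ⟨a, fun b => ⟨(ha b).1.trans hY, (ha b).2.mono (inter_subset_inter_right _ hX)⟩⟩

theorem union_APre_mono (Y : Set Q) : Monotone fun X => ↑T ∪ APre G Y X :=
  fun _ _ h => union_subset_union_right _ (APre_mono subset_rfl h)

variable [Fintype Q]

/-- `μX. T ∪ APre(Y, X)`; like the greatest fixed point in `asRegion`, it is reached after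
`|Q|` iterations. -/
def posAttr (G : Game Q A) (T : Finset Q) (Y : Set Q) : Set Q :=
  (fun X => ↑T ∪ APre G Y X)^[Fintype.card Q] ∅

/-- `νY. μX. T ∪ APre(Y, X)`. -/
def asRegion (G : Game Q A) (T : Finset Q) : Set Q := (posAttr G T)^[Fintype.card Q] univ

/-- `η ^ (i + 1)` on the layer `Ω_i = Y_i \ Y_{i+1}` of the rank decomposition, where
`Y_i = (posAttr G T)^[i] univ` are the outer iterates; `0` on `asRegion`. -/
noncomputable def spoilWeight (G : Game Q A) (T : Finset Q) (η : ℝ) (q : Q) : ℝ :=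
  if h : ∃ k, q ∉ (posAttr G T)^[k] univ then η ^ Nat.find h else 0

theorem posAttr_mono : Monotone (posAttr G T) := fun _ _ h =>
  Monotone.iterate_le_of_le (union_APre_mono _)
    (fun _ => union_subset_union_right _ (APre_mono h subset_rfl)) _ ∅

theorem union_APre_posAttr (Y : Set Q) : ↑T ∪ APre G Y (posAttr G T Y) = posAttr G T Y :=
  isFixedPt_iterate_card_empty (union_APre_mono Y)

theorem posAttr_asRegion : posAttr G T (asRegion G T) = asRegion G T :=
  isFixedPt_iterate_card_univ posAttr_mono

theorem coe_subset_iterate_posAttr (k : ℕ) : ↑T ⊆ (posAttr G T)^[k] univ := by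
  cases k with
  | zero => exact subset_univ _
  | succ k =>
    rw [iterate_succ_apply', ← union_APre_posAttr]
    exact subset_union_left

section SpoilWeight

variable {η : ℝ}

theorem spoilWeight_nonneg (hη : 0 ≤ η) (q : Q) : 0 ≤ spoilWeight G T η q := by
  unfold spoilWeight
  split_ifs
  exacts [pow_nonneg hη _, le_rfl]

theorem spoilWeight_le_one (hη : 0 ≤ η) (hη1 : η ≤ 1) (q : Q) : spoilWeight G T η q ≤ 1 := by
  unfold spoilWeight
  split_ifs
  exacts [pow_le_one₀ hη hη1, zero_le_one]

theorem pow_le_spoilWeight (hη : 0 ≤ η) (hη1 : η ≤ 1) {q : Q} {k : ℕ}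
    (hq : q ∉ (posAttr G T)^[k] univ) :
    η ^ k ≤ spoilWeight G T η q := by
  rw [spoilWeight, dif_pos ⟨k, hq⟩]
  exact pow_le_pow_of_le_one hη hη1 (Nat.find_min' _ hq)

end SpoilWeight

theorem spoilWeight_eq_zero_of_mem (η : ℝ) {q : Q} (hq : q ∈ T) : spoilWeight G T η q = 0 := by
  rw [spoilWeight, dif_neg]
  simpa using fun k => coe_subset_iterate_posAttr k hq

end AlmostSureRegion

section Certificates

open Set Classical

variable [Fintype Q] {G : Game Q A} {T : Finset Q}

theorem exists_escape_of_not_mem_iterate_posAttr {q : Q} {r : ℕ}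
    (hq : q ∉ (posAttr G T)^[r + 1] univ) (a : A) :
    ∃ b, ¬ (supp G q a b ⊆ (posAttr G T)^[r] univ ∧
      (supp G q a b ∩ (posAttr G T)^[r + 1] univ).Nonempty) := by
  refine not_forall.1 fun h => hq ?_
  rw [iterate_succ_apply', ← union_APre_posAttr, ← iterate_succ_apply' (posAttr G T)]
  exact Or.inr ⟨a, h⟩

theorem exists_spoiling_response (hG : IsGame G) {η : ℝ} (hη : 0 ≤ η)
    (hηmin : ∀ q a b q', 0 < G.δ q a b q' → η ≤ G.δ q a b q') (q : Q) (a : A) :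
    ∃ b, spoilWeight G T η q ≤ ∑ q', G.δ q a b q' * spoilWeight G T η q' := by
  have hη1 := hG.le_one_of_le_pos_prob hηmin q a
  by_cases hq : ∃ k, q ∉ (posAttr G T)^[k] univ
  swap
  · refine ⟨a, ?_⟩
    rw [spoilWeight, dif_neg hq]
    exact sum_nonneg fun q' _ => mul_nonneg (hG.1 _ _ _ _) (spoilWeight_nonneg hη q')
  obtain ⟨r, hr⟩ : ∃ r, Nat.find hq = r + 1 :=
    Nat.exists_eq_add_one.2 (Nat.pos_of_ne_zero fun h0 => by simpa [h0] using Nat.find_spec hq)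
  obtain ⟨b, hb⟩ := exists_escape_of_not_mem_iterate_posAttr (hr ▸ Nat.find_spec hq) a
  refine ⟨b, ?_⟩
  rw [spoilWeight, dif_pos hq, hr]
  by_cases hsub : supp G q a b ⊆ (posAttr G T)^[r] univ
  · exact le_sum_mul_of_forall_pos (fun _ _ => hG.1 _ _ _ _) (hG.2 _ _ _) fun q' _ hq' =>
      pow_le_spoilWeight hη hη1 fun hY => hb ⟨hsub, q', hq', hY⟩
  · obtain ⟨q', hq', hq'Y⟩ := not_subset.1 hsub
    calc η ^ (r + 1) = η * η ^ r := pow_succ' η r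
      _ ≤ G.δ q a b q' * spoilWeight G T η q' :=
          mul_le_mul (hηmin _ _ _ _ hq') (pow_le_spoilWeight hη hη1 hq'Y) (pow_nonneg hη r)
            (hG.1 _ _ _ _)
      _ ≤ ∑ q'', G.δ q a b q'' * spoilWeight G T η q'' :=
          single_le_sum (f := fun q'' => G.δ q a b q'' * spoilWeight G T η q'')
            (fun _ _ => mul_nonneg (hG.1 _ _ _ _) (spoilWeight_nonneg hη _)) (mem_univ q')

theorem exists_isAttractorStrategy_asRegion [Nonempty A] :
    ∃ (ρ : Q → ℕ) (α : Q → A), (∀ q ∈ asRegion G T, ρ q ≤ Fintype.card Q) ∧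
      IsAttractorStrategy G T (asRegion G T) ρ α := by
  set W := asRegion G T
  set X : ℕ → Set Q := fun k => (fun X => ↑T ∪ APre G W X)^[k] ∅
  have hWX : ∀ q ∈ W, q ∈ X (Fintype.card Q) := fun q hq =>
    show q ∈ posAttr G T W by rwa [posAttr_asRegion]
  have hex : ∀ q ∈ W, ∃ k, q ∈ X k := fun q hq => ⟨_, hWX q hq⟩
  set ρ : Q → ℕ := fun q => if h : ∃ k, q ∈ X k then Nat.find h else 0
  have hρ : ∀ q ∈ W, q ∉ T → ∃ a, ∀ b, supp G q a b ⊆ W ∧ ∃ q' ∈ supp G q a b, ρ q' < ρ q := by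
    intro q hq hqT
    have hfind := Nat.find_spec (hex q hq)
    obtain ⟨s, hs⟩ : ∃ s, Nat.find (hex q hq) = s + 1 :=
      Nat.exists_eq_add_one.2 (Nat.pos_of_ne_zero fun h0 => by simp [h0, X] at hfind)
    rw [hs] at hfind
    simp only [X, iterate_succ_apply'] at hfind
    obtain ⟨a, ha⟩ := hfind.resolve_left hqT
    refine ⟨a, fun b => ⟨(ha b).1, ?_⟩⟩
    obtain ⟨q', hq', hq'X⟩ := (ha b).2
    refine ⟨q', hq', ?_⟩
    have hq'ex : ∃ k, q' ∈ X k := ⟨s, hq'X⟩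
    simp only [ρ, dif_pos hq'ex, dif_pos (hex q hq), hs]
    exact Nat.lt_succ_of_le (Nat.find_min' _ hq'X)
  choose! α hα using hρ
  refine ⟨ρ, α, fun q hq => ?_, hα⟩
  simp only [ρ, dif_pos (hex q hq)]
  exact Nat.find_min' _ (hWX q hq)

end Certificates

theorem not_as_reach_spoiling {Q A : Type} [Fintype Q] [Fintype A]
    (G : Game Q A) (hG : IsGame G) (T : Finset Q) (d0 : Q → ℝ) (hd0 : IsDist d0)
    (η η0 : ℝ) (hη : 0 < η)
    (hηmin : ∀ q a b q', 0 < G.δ q a b q' → η ≤ G.δ q a b q')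
    (hη0min : ∀ q, 0 < d0 q → η0 ≤ d0 q)
    (hnotAS : ¬ ∃ σ, IsStrat1 σ ∧ ∀ τ, IsStrat2 τ →
        ∀ ε : ℝ, 0 < ε → ∃ i, 1 - ε ≤ reachProb G d0 σ τ T i) :
    ∃ τ, IsStrat2 τ ∧ Memoryless2 τ ∧
      ∀ σ, IsStrat1 σ → ∀ i : ℕ,
        reachProb G d0 σ τ T i ≤ 1 - η0 * η ^ (Fintype.card Q) := by
  choose β hβ using exists_spoiling_response (T := T) hG hη.le hηmin
  refine ⟨pureStrat2 β, isStrat2_pureStrat2 β, memoryless2_pureStrat2 β, fun σ hσ i => ?_⟩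
  obtain ⟨a, -, -⟩ := exists_ne_zero_of_sum_ne_zero ((hσ []).2 ▸ one_ne_zero : ∑ a, σ [] a ≠ 0)
  obtain ⟨q, -, -⟩ := exists_ne_zero_of_sum_ne_zero (hd0.2 ▸ one_ne_zero : ∑ q, d0 q ≠ 0)
  have hη1 := hG.le_one_of_le_pos_prob hηmin q a
  by_cases hd0W : ∀ q, 0 < d0 q → q ∈ asRegion G T
  · have : Nonempty A := ⟨a⟩
    obtain ⟨ρ, α, hρ, hα⟩ := exists_isAttractorStrategy_asRegion (G := G) (T := T)
    exact (hnotAS ⟨pureStrat1 α, isStrat1_pureStrat1 α, fun τ hτ ε hε =>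
      exists_le_reachProb_pureStrat1 hG hd0 hη hη1 hηmin hα hρ hd0W hτ hε⟩).elim
  push Not at hd0W
  obtain ⟨q0, hq0, hq0W⟩ := hd0W
  have hspoil : η0 * η ^ Fintype.card Q ≤ d0 q0 * spoilWeight G T η q0 :=
    mul_le_mul (hη0min q0 hq0) (pow_le_spoilWeight hη.le hη1 hq0W) (pow_nonneg hη.le _) hq0.le
  linarith [reachProb_add_avoidProb (T := T) hG hd0 hσ (isStrat2_pureStrat2 β) i,
    mul_le_avoidProb_pureStrat2 hG hd0 hσ (spoilWeight_le_one hη.le hη1)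
      (fun _ => spoilWeight_eq_zero_of_mem η) hβ q0 i]
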